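/- Let Q be a finite-dimensional simplicial complex, B(Q) its barycentric subdivision, X a geodesic metric space, and {x_δ}_{δ ∈ simplices of Q} a family of points of X. Define F : B(Q) → X inductively: F(v) = x_{⟨v⟩} on vertices of Q, and on each simplex δ of Q with F already defined on ∂δ, extend by geodesic coning to x_δ (sending the barycenter b_δ to x_δ and each segment from b_δ to y ∈ ∂δ to the geodesic from x_δ to F(y)). If X is CAT(0) and d(x_δ, x_{δ'}) ≤ L for all faces δ' ⊆ δ of each simplex δ of dimension ≤ n, then F restricted to each simplex of B(Q) of the form ⟨δ₀,…,δ_d⟩ is Lipschitz with constant ≲ L (constant depending only on n). -/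
import Mathlib


open Metric Set Filter

/-- A unit-speed geodesic ray (parametrized on `[0,∞)`). -/
def IsUnitSpeedRay {X : Type*} [MetricSpace X] (r : ℝ → X) : Prop :=
  ∀ s t : ℝ, 0 ≤ s → 0 ≤ t → dist (r s) (r t) = |s - t|

/-- A geodesic segment, affinely parametrized on `[0,1]`. -/
def IsGeodesicSegment {X : Type*} [MetricSpace X] (γ : ℝ → X) : Prop :=
  ∀ s ∈ Set.Icc (0:ℝ) 1, ∀ t ∈ Set.Icc (0:ℝ) 1,
    dist (γ s) (γ t) = |s - t| * dist (γ 0) (γ 1)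

/-- The defining convexity property of CAT(0) spaces: the distance between any two
affinely parametrized geodesic segments is a convex function of the parameter. -/
def CAT0DistConvex (X : Type*) [MetricSpace X] : Prop :=
  ∀ γ₁ γ₂ : ℝ → X, IsGeodesicSegment γ₁ → IsGeodesicSegment γ₂ →
    ∀ s ∈ Set.Icc (0:ℝ) 1,
      dist (γ₁ s) (γ₂ s) ≤ (1 - s) * dist (γ₁ 0) (γ₂ 0) + s * dist (γ₁ 1) (γ₂ 1)

/-- A function is convex along geodesics:
`h(σ(s)) ≤ (1−s)·h(σ(0)) + s·h(σ(1))` for every geodesic segment `σ`. -/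
def ConvexAlongGeodesics {X : Type*} [MetricSpace X] (h : X → ℝ) : Prop :=
  ∀ γ : ℝ → X, IsGeodesicSegment γ → ∀ s ∈ Set.Icc (0:ℝ) 1,
    h (γ s) ≤ (1 - s) * h (γ 0) + s * h (γ 1)

/-- A geodesic metric space: any two points are joined by a geodesic segment. -/
def GeodesicMetricSpace (X : Type*) [MetricSpace X] : Prop :=
  ∀ a b : X, ∃ γ : ℝ → X, IsGeodesicSegment γ ∧ γ 0 = a ∧ γ 1 = b

/-- A (convex, geodesic) bicombing: a choice of affinely parametrized geodesic
γ a b : [0,1] → X from a to b for every pair of points, such that the distance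
between corresponding points of two geodesics is bounded by the convex
combination of the distances of the endpoints (CAT(0) convexity). -/
def IsConvexBicombing {X : Type*} [MetricSpace X] (γ : X → X → ℝ → X) : Prop :=
  (∀ a b : X, γ a b 0 = a) ∧ (∀ a b : X, γ a b 1 = b) ∧
  (∀ a b : X, ∀ s ∈ Set.Icc (0:ℝ) 1, ∀ t ∈ Set.Icc (0:ℝ) 1,
      dist (γ a b s) (γ a b t) = |s - t| * dist a b) ∧
  (∀ a b a' b' : X, ∀ t ∈ Set.Icc (0:ℝ) 1,
      dist (γ a b t) (γ a' b' t) ≤ (1 - t) * dist a a' + t * dist b b')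

/-- Iterated geodesic coning over the cone points x 0, x 1, …, x n: the geodesic
join map stdSimplex → X obtained by repeatedly coning the previous map to the
next cone point (the map F on a simplex ⟨δ₀,…,δ_d⟩ of the barycentric
subdivision, determined by geodesic coning to the points x_{δ_i}). -/
noncomputable def coneMap {X : Type*} [MetricSpace X] (γ : X → X → ℝ → X)
    (x : ℕ → X) : (n : ℕ) → (Fin (n + 1) → ℝ) → X
  | 0, _ => x 0
  | (n + 1), w =>
      γ (x (n + 1))
        (coneMap γ x n (fun i => w i.castSucc / (1 - w (Fin.last (n + 1)))))
        (1 - w (Fin.last (n + 1)))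

section Aux

variable {X : Type*} [MetricSpace X] {γ : X → X → ℝ → X}

lemma bicombing_self (hγ : IsConvexBicombing γ) (a : X) {t : ℝ}
    (ht : t ∈ Set.Icc (0:ℝ) 1) : γ a a t = a := by
  obtain ⟨h0, _, hgeo, _⟩ := hγ
  have h := hgeo a a t ht 0 ⟨le_refl 0, zero_le_one⟩
  rw [h0, dist_self, mul_zero, dist_eq_zero] at h
  exact h

lemma dist_point_bicombing (hγ : IsConvexBicombing γ) (c a b : X) {t : ℝ}
    (ht : t ∈ Set.Icc (0:ℝ) 1) :
    dist c (γ a b t) ≤ (1 - t) * dist c a + t * dist c b := by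
  have h := hγ.2.2.2 c c a b t ht
  rwa [bicombing_self hγ c ht] at h

lemma sos_nonneg {n : ℕ} {v : Fin (n+1) → ℝ}
    (h : v ∈ stdSimplex ℝ (Fin (n+1)) ∨ v = 0) (i : Fin (n+1)) : 0 ≤ v i := by
  rcases h with h | h
  · exact h.1 i
  · simp [h]

lemma sos_le_one {n : ℕ} {v : Fin (n+1) → ℝ}
    (h : v ∈ stdSimplex ℝ (Fin (n+1)) ∨ v = 0) (i : Fin (n+1)) : v i ≤ 1 := by
  rcases h with h | h
  · calc v i ≤ ∑ j, v j := Finset.single_le_sum (fun j _ => h.1 j) (Finset.mem_univ i)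
    _ = 1 := h.2
  · simp [h]

lemma scale_mem_pos {n : ℕ} {w : Fin (n+2) → ℝ}
    (h : w ∈ stdSimplex ℝ (Fin (n+2))) (hlt : w (Fin.last (n+1)) < 1) :
    (fun i : Fin (n+1) => w i.castSucc / (1 - w (Fin.last (n+1)))) ∈
      stdSimplex ℝ (Fin (n+1)) := by
  have ht : 0 < 1 - w (Fin.last (n+1)) := by linarith
  constructor
  · intro i; exact div_nonneg (h.1 _) ht.le
  · rw [← Finset.sum_div]
    have hsum : ∑ i : Fin (n+1), w i.castSucc = 1 - w (Fin.last (n+1)) := by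
      have h2 := h.2
      rw [Fin.sum_univ_castSucc] at h2
      linarith
    rw [hsum, div_self ht.ne']

lemma scale_mem {n : ℕ} {w : Fin (n+2) → ℝ}
    (h : w ∈ stdSimplex ℝ (Fin (n+2)) ∨ w = 0) :
    (fun i : Fin (n+1) => w i.castSucc / (1 - w (Fin.last (n+1)))) ∈
      stdSimplex ℝ (Fin (n+1)) ∨
    (fun i : Fin (n+1) => w i.castSucc / (1 - w (Fin.last (n+1)))) = 0 := by
  rcases h with h | h
  · by_cases hlast : w (Fin.last (n+1)) = 1
    · right; funext i; simp [hlast]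
    · exact Or.inl (scale_mem_pos h (lt_of_le_of_ne (sos_le_one (Or.inl h) _) hlast))
  · right; funext i; simp [h]

lemma coneMap_zero (hγ : IsConvexBicombing γ) (x : ℕ → X) :
    ∀ n, coneMap γ x n (0 : Fin (n+1) → ℝ) = x 0 := by
  intro n
  induction n with
  | zero => rfl
  | succ n ih =>
    have hfun : (fun i : Fin (n+1) =>
        (0 : Fin (n+2) → ℝ) i.castSucc / (1 - (0 : Fin (n+2) → ℝ) (Fin.last (n+1))))
        = (0 : Fin (n+1) → ℝ) := by funext i; simp
    show γ (x (n+1)) _ _ = x 0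
    rw [hfun, ih]
    have : (1 - (0 : Fin (n+2) → ℝ) (Fin.last (n+1))) = 1 := by simp
    rw [this, hγ.2.1]

lemma dist_coneMap_le (hγ : IsConvexBicombing γ) (x : ℕ → X) (L : ℝ)
    (hL : ∀ i j, dist (x i) (x j) ≤ L) :
    ∀ n (v : Fin (n+1) → ℝ), (v ∈ stdSimplex ℝ (Fin (n+1)) ∨ v = 0) →
      ∀ j, dist (x j) (coneMap γ x n v) ≤ L := by
  intro n
  induction n with
  | zero => intro v _ j; exact hL j 0
  | succ n ih =>
    intro v hv j
    have hvl0 : 0 ≤ v (Fin.last (n+1)) := sos_nonneg hv _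
    have hvl1 : v (Fin.last (n+1)) ≤ 1 := sos_le_one hv _
    have ht : (1 - v (Fin.last (n+1))) ∈ Set.Icc (0:ℝ) 1 := ⟨by linarith, by linarith⟩
    have hb := ih _ (scale_mem hv) j
    have hmain := dist_point_bicombing hγ (x j) (x (n+1))
      (coneMap γ x n fun i => v i.castSucc / (1 - v (Fin.last (n+1)))) ht
    have hcone : coneMap γ x (n+1) v = γ (x (n+1))
        (coneMap γ x n fun i => v i.castSucc / (1 - v (Fin.last (n+1))))
        (1 - v (Fin.last (n+1))) := rfl
    rw [hcone]
    nlinarith [mul_le_mul_of_nonneg_left (hL j (n+1)) hvl0,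
      mul_le_mul_of_nonneg_left hb (show (0:ℝ) ≤ 1 - v (Fin.last (n+1)) by linarith)]

lemma coneMap_congr (x y : ℕ → X) :
    ∀ n, (∀ i, i ≤ n → x i = y i) → ∀ v, coneMap γ x n v = coneMap γ y n v := by
  intro n
  induction n with
  | zero => intro h v; exact h 0 le_rfl
  | succ n ih =>
    intro h v
    show γ (x (n+1)) _ _ = γ (y (n+1)) _ _
    rw [h (n+1) le_rfl, ih (fun i hi => h i (Nat.le_succ_of_le hi))]

lemma coneMap_lip (hγ : IsConvexBicombing γ) :
    ∀ n : ℕ, ∃ K : ℝ, 1 ≤ K ∧ ∀ (x : ℕ → X) (L : ℝ), 0 ≤ L →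
      (∀ i j, dist (x i) (x j) ≤ L) →
      ∀ w ∈ stdSimplex ℝ (Fin (n + 1)), ∀ w' ∈ stdSimplex ℝ (Fin (n + 1)),
        dist (coneMap γ x n w) (coneMap γ x n w') ≤ K * L * dist w w' := by
  intro n
  induction n with
  | zero =>
    refine ⟨1, le_refl 1, fun x L hL0 _ w _ w' _ => ?_⟩
    show dist (x 0) (x 0) ≤ 1 * L * dist w w'
    rw [dist_self]
    positivity
  | succ n ih =>
    obtain ⟨K, hK1, hK⟩ := ih
    refine ⟨2*K+1, by linarith, ?_⟩
    intro x L hL0 hL w hw w' hw'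
    set tl := w (Fin.last (n+1)) with htl_def
    set tl' := w' (Fin.last (n+1)) with htl'_def
    set v := fun i : Fin (n+1) => w i.castSucc / (1 - tl) with hv_def
    set v' := fun i : Fin (n+1) => w' i.castSucc / (1 - tl') with hv'_def
    set b := coneMap γ x n v with hb_def
    set b' := coneMap γ x n v' with hb'_def
    have htl0 : 0 ≤ tl := sos_nonneg (Or.inl hw) _
    have htl1 : tl ≤ 1 := sos_le_one (Or.inl hw) _
    have htl'0 : 0 ≤ tl' := sos_nonneg (Or.inl hw') _
    have htl'1 : tl' ≤ 1 := sos_le_one (Or.inl hw') _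
    have hIcc : (1 - tl) ∈ Set.Icc (0:ℝ) 1 := ⟨by linarith, by linarith⟩
    have hIcc' : (1 - tl') ∈ Set.Icc (0:ℝ) 1 := ⟨by linarith, by linarith⟩
    have hdw0 : 0 ≤ dist w w' := dist_nonneg
    have hdlast : |tl - tl'| ≤ dist w w' := by
      have := dist_le_pi_dist w w' (Fin.last (n+1))
      rwa [Real.dist_eq] at this
    have hcone : coneMap γ x (n+1) w = γ (x (n+1)) b (1 - tl) := rfl
    have hcone' : coneMap γ x (n+1) w' = γ (x (n+1)) b' (1 - tl') := rfl
    rw [hcone, hcone']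
    -- triangle inequality split
    have htri : dist (γ (x (n+1)) b (1 - tl)) (γ (x (n+1)) b' (1 - tl'))
        ≤ dist (γ (x (n+1)) b (1 - tl)) (γ (x (n+1)) b' (1 - tl))
          + dist (γ (x (n+1)) b' (1 - tl)) (γ (x (n+1)) b' (1 - tl')) :=
      dist_triangle _ _ _
    -- second term
    have hterm2 : dist (γ (x (n+1)) b' (1 - tl)) (γ (x (n+1)) b' (1 - tl'))
        ≤ dist w w' * L := by
      have heq := hγ.2.2.1 (x (n+1)) b' (1 - tl) hIcc (1 - tl') hIcc'
      rw [heq, show (1:ℝ) - tl - (1 - tl') = tl' - tl by ring]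
      have hab' : dist (x (n+1)) b' ≤ L :=
        dist_coneMap_le hγ x L hL n v' (scale_mem (Or.inl hw')) (n+1)
      have h1 : |tl' - tl| ≤ dist w w' := by rwa [abs_sub_comm]
      exact mul_le_mul h1 hab' dist_nonneg hdw0
    -- first term
    have hterm1 : dist (γ (x (n+1)) b (1 - tl)) (γ (x (n+1)) b' (1 - tl))
        ≤ (1 - tl) * dist b b' := by
      have := hγ.2.2.2 (x (n+1)) b (x (n+1)) b' (1 - tl) hIcc
      rwa [dist_self, mul_zero, zero_add] at this
    -- bound (1-tl) * dist b b'
    have hmid : (1 - tl) * dist b b' ≤ 2 * K * L * dist w w' := by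
      rcases eq_or_lt_of_le htl1 with h1 | h1
      · rw [← h1]
        simp only [sub_self, zero_mul]
        positivity
      · have ht : 0 < 1 - tl := by linarith
        rcases eq_or_lt_of_le htl'1 with h1' | h1'
        · -- tl' = 1 : b' = x 0
          have hv'0 : v' = 0 := by funext i; simp [hv'_def, ← h1']
          have hb'x : b' = x 0 := by rw [hb'_def, hv'0, coneMap_zero hγ]
          have hbb' : dist b b' ≤ L := by
            rw [hb'x, dist_comm]
            exact dist_coneMap_le hγ x L hL n v (scale_mem (Or.inl hw)) 0
          have htd : 1 - tl ≤ dist w w' := by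
            have : |tl - tl'| = 1 - tl := by rw [← h1']; rw [abs_of_nonpos (by linarith)]; ring
            linarith [hdlast, this.symm.le]
          calc (1 - tl) * dist b b' ≤ dist w w' * L :=
                mul_le_mul htd hbb' dist_nonneg hdw0
            _ ≤ 2 * K * L * dist w w' := by
                nlinarith [mul_nonneg (mul_nonneg hL0 hdw0) (show (0:ℝ) ≤ 2*K-1 by linarith)]
        · -- both positive
          have ht' : 0 < 1 - tl' := by linarith
          have hvmem : v ∈ stdSimplex ℝ (Fin (n+1)) := scale_mem_pos hw h1
          have hv'mem : v' ∈ stdSimplex ℝ (Fin (n+1)) := scale_mem_pos hw' h1'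
          have hvv' : dist v v' ≤ 2 * dist w w' / (1 - tl) := by
            rw [dist_pi_le_iff (by positivity)]
            intro i
            rw [Real.dist_eq, le_div_iff₀ ht]
            have e1 : v i * (1 - tl) = w i.castSucc := div_mul_cancel₀ _ ht.ne'
            have e2 : v' i * (1 - tl') = w' i.castSucc := div_mul_cancel₀ _ ht'.ne'
            have key : (v i - v' i) * (1 - tl)
                = (w i.castSucc - w' i.castSucc) + v' i * ((1 - tl') - (1 - tl)) := by
              rw [← e1, ← e2]; ring
            have habs : |v i - v' i| * (1 - tl) = |(v i - v' i) * (1 - tl)| := by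
              rw [abs_mul, abs_of_pos ht]
            rw [habs, key]
            have hco : |w i.castSucc - w' i.castSucc| ≤ dist w w' := by
              have := dist_le_pi_dist w w' i.castSucc
              rwa [Real.dist_eq] at this
            have hco2 : |v' i * ((1 - tl') - (1 - tl))| ≤ dist w w' := by
              rw [abs_mul, abs_of_nonneg (hv'mem.1 i)]
              have h1v : |(1 - tl') - (1 - tl)| ≤ dist w w' := by
                rw [show (1 - tl') - (1 - tl) = tl - tl' by ring]
                exact hdlast
              calc v' i * |(1 - tl') - (1 - tl)| ≤ 1 * dist w w' := by
                    apply mul_le_mul (sos_le_one (Or.inl hv'mem) i) h1v (abs_nonneg _) zero_le_one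
                _ = dist w w' := one_mul _
            calc |(w i.castSucc - w' i.castSucc) + v' i * ((1 - tl') - (1 - tl))|
                ≤ |w i.castSucc - w' i.castSucc| + |v' i * ((1 - tl') - (1 - tl))| := abs_add_le _ _
              _ ≤ 2 * dist w w' := by linarith
          have hbb' : dist b b' ≤ K * L * (2 * dist w w' / (1 - tl)) := by
            calc dist b b' ≤ K * L * dist v v' := hK x L hL0 hL v hvmem v' hv'mem
              _ ≤ K * L * (2 * dist w w' / (1 - tl)) := by
                  apply mul_le_mul_of_nonneg_left hvv' (by positivity)
          calc (1 - tl) * dist b b' ≤ (1 - tl) * (K * L * (2 * dist w w' / (1 - tl))) :=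
                mul_le_mul_of_nonneg_left hbb' ht.le
            _ = 2 * K * L * dist w w' := by field_simp
    calc dist (γ (x (n+1)) b (1 - tl)) (γ (x (n+1)) b' (1 - tl'))
        ≤ dist (γ (x (n+1)) b (1 - tl)) (γ (x (n+1)) b' (1 - tl))
          + dist (γ (x (n+1)) b' (1 - tl)) (γ (x (n+1)) b' (1 - tl')) := htri
      _ ≤ (1 - tl) * dist b b' + dist w w' * L := add_le_add hterm1 hterm2
      _ ≤ 2 * K * L * dist w w' + dist w w' * L := by linarith
      _ = (2*K+1) * L * dist w w' := by ring

end Aux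

/-- In a CAT(0) space, the map F : ⟨δ₀,…,δ_n⟩ → X obtained by
iterated geodesic coning over points x_{δ₀}, …, x_{δ_n} which are pairwise at
distance at most L is Lipschitz on the simplex with constant ≲ L, the implied
constant depending only on n. -/
theorem coneMap_lipschitz_on_barycentric_simplex
    {X : Type*} [MetricSpace X] (γ : X → X → ℝ → X)
    (hγ : IsConvexBicombing γ) (n : ℕ) :
    ∃ K : ℝ, 0 < K ∧ ∀ (x : ℕ → X) (L : ℝ), 0 ≤ L →
      (∀ i j : ℕ, i ≤ n → j ≤ n → dist (x i) (x j) ≤ L) →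
      ∀ w ∈ stdSimplex ℝ (Fin (n + 1)), ∀ w' ∈ stdSimplex ℝ (Fin (n + 1)),
        dist (coneMap γ x n w) (coneMap γ x n w') ≤ K * L * dist w w' := by
  obtain ⟨K, hK1, hK⟩ := coneMap_lip hγ n
  refine ⟨K, lt_of_lt_of_le one_pos hK1, ?_⟩
  intro x L hL0 hL w hw w' hw'
  have hcongr : coneMap γ x n w = coneMap γ (fun i => x (min i n)) n w :=
    coneMap_congr x (fun i => x (min i n)) n (fun i hi => by simp [min_eq_left hi]) w
  have hcongr' : coneMap γ x n w' = coneMap γ (fun i => x (min i n)) n w' :=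
    coneMap_congr x (fun i => x (min i n)) n (fun i hi => by simp [min_eq_left hi]) w'
  rw [hcongr, hcongr']
  exact hK (fun i => x (min i n)) L hL0
    (fun i j => hL _ _ (min_le_right _ _) (min_le_right _ _)) w hw w' hw'
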